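/- Predictive OMD regret bound: let φ : D → ℝ≥0 be differentiable and 1-strongly convex w.r.t. ‖·‖ on the closed convex set D ⊆ ℝⁿ, η > 0, and z⁰ ∈ D. Define xᵗ = argmin_{x∈D} ⟨mᵗ, x⟩ + (1/η)D(x‖zᵗ⁻¹) and zᵗ = argmin_{z∈D} ⟨ℓᵗ, z⟩ + (1/η)D(z‖zᵗ⁻¹), where D(·‖·) is the Bregman divergence of φ. Then for all x̂ ∈ D and T: Σₜ₌₁ᵀ ⟨ℓᵗ, xᵗ − x̂⟩ ≤ D(x̂‖z⁰)/η + η Σₜ₌₁ᵀ ‖ℓᵗ − mᵗ‖*² − (1/(8η)) Σₜ₌₁^{T−1} ‖xᵗ⁺¹ − xᵗ‖². -/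

import Mathlib

open scoped InnerProductSpace BigOperators

/-!
Adding the first-order optimality conditions of the two proximal steps of round `t` and
rewriting them with the three-point identity for Bregman divergences gives
`η⟪ℓᵗ, xᵗ - x̂⟫ ≤ D(x̂‖zᵗ⁻¹) - D(x̂‖zᵗ) + η⟪ℓᵗ - mᵗ, xᵗ - zᵗ⟫ - D(zᵗ‖xᵗ) - D(xᵗ‖zᵗ⁻¹)`.
Young's inequality bounds the cross term by `η²‖ℓᵗ - mᵗ‖*² + ‖xᵗ - zᵗ‖²/4`, strong convexity
turns the last two divergences into squared distances, and the first two telescope over `t`.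
The retained distances pay for the movement, as
`‖xᵗ⁺¹ - xᵗ‖² ≤ 2‖xᵗ⁺¹ - zᵗ‖² + 2‖xᵗ - zᵗ‖²`.
-/

-- A seminorm is convex, hence continuous in finite dimension, so it attains a positive minimum
-- on the unit sphere.
theorem Seminorm.exists_pos_mul_norm_le {E : Type*} [NormedAddCommGroup E] [NormedSpace ℝ E]
    [FiniteDimensional ℝ E] (p : Seminorm ℝ E) (hp : ∀ x, x ≠ 0 → 0 < p x) :
    ∃ c > 0, ∀ x, c * ‖x‖ ≤ p x := by
  cases subsingleton_or_nontrivial E with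
  | inl _ => exact ⟨1, one_pos, fun x => by simp [Subsingleton.elim x 0]⟩
  | inr _ =>
    obtain ⟨x₀, hx₀, hmin⟩ := (isCompact_sphere (0 : E) 1).exists_isMinOn
      (NormedSpace.sphere_nonempty.mpr zero_le_one)
      p.convexOn.locallyLipschitz.continuous.continuousOn
    refine ⟨p x₀, hp x₀ (ne_zero_of_mem_unit_sphere ⟨x₀, hx₀⟩), fun x => ?_⟩
    rcases eq_or_ne x 0 with rfl | hx
    · simp
    have hxn : 0 < ‖x‖ := norm_pos_iff.mpr hx
    have hu : ‖x‖⁻¹ • x ∈ Metric.sphere (0 : E) 1 := by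
      simp [norm_smul, hxn.ne']
    calc p x₀ * ‖x‖ ≤ p (‖x‖⁻¹ • x) * ‖x‖ := by gcongr; exact hmin hu
      _ = p x := by rw [map_smul_eq_mul, norm_inv, norm_norm]; field_simp

section DualNorm

variable {E : Type*} [NormedAddCommGroup E] [InnerProductSpace ℝ E]

-- `sSup` of a set that is not bounded above is `0`: this is the dual norm only for definite `N`.
noncomputable def dualNorm (N : E → ℝ) (a : E) : ℝ :=
  sSup {r : ℝ | ∃ x, N x ≤ 1 ∧ r = ⟪a, x⟫_ℝ}

variable [FiniteDimensional ℝ E]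

theorem bddAbove_inner_of_seminorm_le_one (p : Seminorm ℝ E) (hp : ∀ x, x ≠ 0 → 0 < p x) (a : E) :
    BddAbove {r : ℝ | ∃ x, p x ≤ 1 ∧ r = ⟪a, x⟫_ℝ} := by
  obtain ⟨c, hc, hle⟩ := p.exists_pos_mul_norm_le hp
  refine ⟨‖a‖ / c, ?_⟩
  rintro _ ⟨x, hx, rfl⟩
  calc ⟪a, x⟫_ℝ ≤ ‖a‖ * ‖x‖ := real_inner_le_norm a x
    _ ≤ ‖a‖ * (1 / c) := by
        gcongr
        rw [le_div_iff₀ hc]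
        linarith [hle x]
    _ = ‖a‖ / c := by ring

theorem real_inner_le_dualNorm_mul (p : Seminorm ℝ E) (hp : ∀ x, x ≠ 0 → 0 < p x) (a w : E) :
    ⟪a, w⟫_ℝ ≤ dualNorm p a * p w := by
  rcases eq_or_ne w 0 with rfl | hw
  · simp
  have hpw := hp w hw
  have hunit_le : p ((p w)⁻¹ • w) ≤ 1 := by
    rw [map_smul_eq_mul, norm_inv, Real.norm_eq_abs, abs_of_pos hpw, inv_mul_cancel₀ hpw.ne']
  have hunit : ⟪a, (p w)⁻¹ • w⟫_ℝ ≤ dualNorm p a :=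
    le_csSup (bddAbove_inner_of_seminorm_le_one p hp a) ⟨_, hunit_le, rfl⟩
  rw [real_inner_smul_right] at hunit
  calc ⟪a, w⟫_ℝ = p w * ((p w)⁻¹ * ⟪a, w⟫_ℝ) := by field_simp
    _ ≤ p w * dualNorm p a := by gcongr
    _ = dualNorm p a * p w := mul_comm _ _

end DualNorm

theorem IsMinOn.hasFDerivAt_sub_nonneg {E : Type*} [NormedAddCommGroup E] [NormedSpace ℝ E]
    {f : E → ℝ} {f' : E →L[ℝ] ℝ} {D : Set E} {a u : E} (hmin : IsMinOn f D a)
    (hf : HasFDerivAt f f' a) (hD : Convex ℝ D) (ha : a ∈ D) (hu : u ∈ D) : 0 ≤ f' (u - a) :=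
  hmin.localize.hasFDerivWithinAt_nonneg hf.hasFDerivWithinAt
    (sub_mem_posTangentConeAt_of_segment_subset (hD.segment_subset ha hu))

section Bregman

variable {E : Type*} [NormedAddCommGroup E] [InnerProductSpace ℝ E]

-- `g` stands for the gradient map of `φ`.
def bregman (φ : E → ℝ) (g : E → E) (x c : E) : ℝ :=
  φ x - φ c - ⟪g c, x - c⟫_ℝ

variable {φ : E → ℝ} {g : E → E}

theorem inner_sub_eq_bregman (a c u : E) :
    ⟪g a - g c, u - a⟫_ℝ = bregman φ g u c - bregman φ g u a - bregman φ g a c := by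
  simp only [bregman, inner_sub_left, inner_sub_right]
  ring

variable [CompleteSpace E]

theorem hasFDerivAt_bregman {a : E} (hφ : HasGradientAt φ (g a) a) (c : E) :
    HasFDerivAt (fun y => bregman φ g y c)
      (InnerProductSpace.toDual ℝ E (g a) - innerSL ℝ (g c)) a := by
  have hlin : HasFDerivAt (fun y => ⟪g c, y - c⟫_ℝ) (innerSL ℝ (g c)) a := by
    simpa only [innerSL_apply_apply, inner_sub_right] using
      (innerSL ℝ (g c)).hasFDerivAt.sub_const ⟪g c, c⟫_ℝ
  exact (hφ.hasFDerivAt.sub_const (φ c)).sub hlin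

theorem inner_sub_le_bregman_of_isMinOn {D : Set E} (hD : Convex ℝ D) {η : ℝ} (hη : 0 < η)
    {v a c u : E} (hφ : HasGradientAt φ (g a) a) (ha : a ∈ D)
    (hmin : IsMinOn (fun y => ⟪v, y⟫_ℝ + 1 / η * bregman φ g y c) D a) (hu : u ∈ D) :
    η * ⟪v, a - u⟫_ℝ ≤ bregman φ g u c - bregman φ g u a - bregman φ g a c := by
  have hderiv := (innerSL ℝ v).hasFDerivAt.add ((hasFDerivAt_bregman hφ c).const_mul (1 / η))
  have hfirst : 0 ≤ ⟪v, u - a⟫_ℝ + 1 / η * ⟪g a - g c, u - a⟫_ℝ := by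
    simpa only [add_apply, smul_apply, sub_apply, innerSL_apply_apply,
      InnerProductSpace.toDual_apply_apply, smul_eq_mul, ← inner_sub_left]
      using hmin.hasFDerivAt_sub_nonneg hderiv hD ha hu
  rw [inner_sub_eq_bregman] at hfirst
  have hflip : ⟪v, a - u⟫_ℝ = -⟪v, u - a⟫_ℝ := by rw [← inner_neg_right, neg_sub]
  rw [hflip]
  field_simp at hfirst
  linarith

end Bregman

section OptimisticStep

variable {E : Type*} [NormedAddCommGroup E] [InnerProductSpace ℝ E] [CompleteSpace E]
  {D : Set E} {φ : E → ℝ} {g : E → E} {p : Seminorm ℝ E} {Nd : E → ℝ} {η : ℝ}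

theorem optimistic_step_le (hD : Convex ℝ D) (hη : 0 < η)
    (hdual : ∀ a w, ⟪a, w⟫_ℝ ≤ Nd a * p w)
    (hgrad : ∀ y ∈ D, HasGradientAt φ (g y) y)
    (hstrong : ∀ y ∈ D, ∀ y' ∈ D, 1 / 2 * p (y - y') ^ 2 ≤ bregman φ g y y')
    {ℓ m c x z xhat : E} (hc : c ∈ D)
    (hx : x ∈ D) (hxmin : IsMinOn (fun y => ⟪m, y⟫_ℝ + 1 / η * bregman φ g y c) D x)
    (hz : z ∈ D) (hzmin : IsMinOn (fun y => ⟪ℓ, y⟫_ℝ + 1 / η * bregman φ g y c) D z)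
    (hxhat : xhat ∈ D) :
    η * ⟪ℓ, x - xhat⟫_ℝ ≤ bregman φ g xhat c - bregman φ g xhat z +
      (η ^ 2 * Nd (ℓ - m) ^ 2 - (1 / 4 * p (x - z) ^ 2 + 1 / 2 * p (x - c) ^ 2)) := by
  have hxstep := inner_sub_le_bregman_of_isMinOn hD hη (hgrad x hx) hx hxmin hz
  have hzstep := inner_sub_le_bregman_of_isMinOn hD hη (hgrad z hz) hz hzmin hxhat
  have hsplit : ⟪ℓ, x - xhat⟫_ℝ = ⟪ℓ - m, x - z⟫_ℝ + ⟪m, x - z⟫_ℝ + ⟪ℓ, z - xhat⟫_ℝ := by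
    simp only [inner_sub_left, inner_sub_right]
    ring
  -- Young's inequality `η N* N ≤ η² N*² + N² / 4`.
  have hyoung : η * ⟪ℓ - m, x - z⟫_ℝ ≤ η ^ 2 * Nd (ℓ - m) ^ 2 + 1 / 4 * p (x - z) ^ 2 := by
    nlinarith [mul_le_mul_of_nonneg_left (hdual (ℓ - m) (x - z)) hη.le,
      sq_nonneg (2 * η * Nd (ℓ - m) - p (x - z))]
  have hzx : 1 / 2 * p (x - z) ^ 2 ≤ bregman φ g z x := by
    simpa only [← neg_sub x z, map_neg_eq_map] using hstrong z hz x hx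
  have hxc := hstrong x hx c hc
  rw [hsplit]
  linarith

end OptimisticStep

theorem sum_Icc_le_of_le_sub_add {f b h : ℕ → ℝ} (hstep : ∀ t, 1 ≤ t → f t ≤ b (t - 1) - b t + h t)
    (T : ℕ) : ∑ t ∈ Finset.Icc 1 T, f t ≤ b 0 - b T + ∑ t ∈ Finset.Icc 1 T, h t := by
  induction T with
  | zero => simp
  | succ T ih =>
    rw [Finset.sum_Icc_succ_top (by omega), Finset.sum_Icc_succ_top (by omega)]
    have hlast := hstep (T + 1) (by omega)
    rw [Nat.add_sub_cancel] at hlast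
    linarith

theorem sum_Icc_succ_le {f : ℕ → ℝ} (hf : ∀ t, 0 ≤ f t) (T : ℕ) :
    ∑ t ∈ Finset.Icc 1 (T - 1), f (t + 1) ≤ ∑ t ∈ Finset.Icc 1 T, f t := by
  rw [← Finset.sum_image (g := (· + 1)) (by simp)]
  refine Finset.sum_le_sum_of_subset_of_nonneg ?_ fun t _ _ => hf t
  intro t
  simp only [Finset.mem_image, Finset.mem_Icc]
  omega

theorem Seminorm.sum_sq_sub_succ_le {E : Type*} [AddCommGroup E] [Module ℝ E] (p : Seminorm ℝ E)
    (x z : ℕ → E) (T : ℕ) :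
    1 / 8 * ∑ t ∈ Finset.Icc 1 (T - 1), p (x (t + 1) - x t) ^ 2 ≤
      ∑ t ∈ Finset.Icc 1 T, (1 / 4 * p (x t - z t) ^ 2 + 1 / 2 * p (x t - z (t - 1)) ^ 2) := by
  have hterm : ∀ t, 1 / 8 * p (x (t + 1) - x t) ^ 2 ≤
      1 / 4 * p (x t - z t) ^ 2 + 1 / 2 * p (x (t + 1) - z (t + 1 - 1)) ^ 2 := by
    intro t
    have htri : p (x (t + 1) - x t) ≤ p (x (t + 1) - z t) + p (x t - z t) := by
      simpa only [sub_sub_sub_cancel_right] using map_sub_le_add p (x (t + 1) - z t) (x t - z t)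
    simp only [Nat.add_sub_cancel]
    nlinarith [apply_nonneg p (x (t + 1) - x t), sq_nonneg (p (x (t + 1) - z t) - p (x t - z t))]
  calc 1 / 8 * ∑ t ∈ Finset.Icc 1 (T - 1), p (x (t + 1) - x t) ^ 2
      ≤ ∑ t ∈ Finset.Icc 1 (T - 1), (1 / 4 * p (x t - z t) ^ 2 +
          1 / 2 * p (x (t + 1) - z (t + 1 - 1)) ^ 2) := by
        rw [Finset.mul_sum]
        exact Finset.sum_le_sum fun t _ => hterm t
    _ ≤ ∑ t ∈ Finset.Icc 1 T, 1 / 4 * p (x t - z t) ^ 2 +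
          ∑ t ∈ Finset.Icc 1 T, 1 / 2 * p (x t - z (t - 1)) ^ 2 := by
        rw [Finset.sum_add_distrib]
        gcongr ?_ + ?_
        · exact Finset.sum_le_sum_of_subset_of_nonneg (Finset.Icc_subset_Icc_right (by omega))
            fun _ _ _ => by positivity
        · exact sum_Icc_succ_le (f := fun t => 1 / 2 * p (x t - z (t - 1)) ^ 2)
            (fun _ => by positivity) T
    _ = _ := Finset.sum_add_distrib.symm

theorem stmt_14_general {n : ℕ} (D : Set (EuclideanSpace ℝ (Fin n)))
    (hDconv : Convex ℝ D)
    (N Nd : EuclideanSpace ℝ (Fin n) → ℝ)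
    (hNadd : ∀ x y, N (x + y) ≤ N x + N y)
    (hNsmul : ∀ (c : ℝ) (x), N (c • x) = |c| * N x)
    (hNpos : ∀ x, x ≠ 0 → 0 < N x)
    (hNd : ∀ a, Nd a = sSup {r : ℝ | ∃ x, N x ≤ 1 ∧ r = ⟪a, x⟫_ℝ})
    (φ : EuclideanSpace ℝ (Fin n) → ℝ)
    (gφ : EuclideanSpace ℝ (Fin n) → EuclideanSpace ℝ (Fin n))
    (hdiff : ∀ x ∈ D, HasGradientAt φ (gφ x) x)
    (hstrong : ∀ x ∈ D, ∀ y ∈ D, φ x + ⟪gφ x, y - x⟫_ℝ + 1 / 2 * (N (y - x)) ^ 2 ≤ φ y)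
    (Breg : EuclideanSpace ℝ (Fin n) → EuclideanSpace ℝ (Fin n) → ℝ)
    (hBreg : ∀ x c, Breg x c = φ x - φ c - ⟪gφ c, x - c⟫_ℝ)
    (η : ℝ) (hη : 0 < η)
    (ℓ m x z : ℕ → EuclideanSpace ℝ (Fin n))
    (hz0 : z 0 ∈ D)
    (hx : ∀ t : ℕ, 1 ≤ t → x t ∈ D ∧
      IsMinOn (fun y => ⟪m t, y⟫_ℝ + 1 / η * Breg y (z (t - 1))) D (x t))
    (hz : ∀ t : ℕ, 1 ≤ t → z t ∈ D ∧
      IsMinOn (fun y => ⟪ℓ t, y⟫_ℝ + 1 / η * Breg y (z (t - 1))) D (z t)) :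
    ∀ xhat ∈ D, ∀ T : ℕ,
      ∑ t ∈ Finset.Icc 1 T, ⟪ℓ t, x t - xhat⟫_ℝ ≤
        Breg xhat (z 0) / η + η * ∑ t ∈ Finset.Icc 1 T, (Nd (ℓ t - m t)) ^ 2 -
          1 / (8 * η) * ∑ t ∈ Finset.Icc 1 (T - 1), (N (x (t + 1) - x t)) ^ 2 := by
  intro xhat hxhat T
  obtain ⟨p, rfl⟩ : ∃ p : Seminorm ℝ (EuclideanSpace ℝ (Fin n)), ⇑p = N :=
    ⟨Seminorm.of N hNadd fun c x => by rw [hNsmul, Real.norm_eq_abs], rfl⟩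
  obtain rfl : Nd = dualNorm p := funext hNd
  obtain rfl : Breg = bregman φ gφ := funext₂ hBreg
  have hzD : ∀ t, z t ∈ D
    | 0 => hz0
    | t + 1 => (hz (t + 1) t.succ_pos).1
  have hbregman : ∀ y ∈ D, ∀ y' ∈ D, 1 / 2 * p (y - y') ^ 2 ≤ bregman φ gφ y y' :=
    fun y hy y' hy' => by rw [bregman]; linarith [hstrong y' hy' y hy]
  have hregret := sum_Icc_le_of_le_sub_add (b := fun t => bregman φ gφ xhat (z t)) (T := T)
    fun t ht => optimistic_step_le hDconv hη (real_inner_le_dualNorm_mul p hNpos) hdiff hbregman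
      (hzD (t - 1)) (hx t ht).1 (hx t ht).2 (hz t ht).1 (hz t ht).2 hxhat
  simp only [← Finset.mul_sum, Finset.sum_sub_distrib] at hregret
  have hmove := p.sum_sq_sub_succ_le x z T
  have hlast : 0 ≤ bregman φ gφ xhat (z T) :=
    le_trans (by positivity) (hbregman xhat hxhat (z T) (hzD T))
  calc ∑ t ∈ Finset.Icc 1 T, ⟪ℓ t, x t - xhat⟫_ℝ
      = (η * ∑ t ∈ Finset.Icc 1 T, ⟪ℓ t, x t - xhat⟫_ℝ) / η := by field_simp
    _ ≤ (bregman φ gφ xhat (z 0) + η ^ 2 * ∑ t ∈ Finset.Icc 1 T, dualNorm p (ℓ t - m t) ^ 2 -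
          1 / 8 * ∑ t ∈ Finset.Icc 1 (T - 1), p (x (t + 1) - x t) ^ 2) / η := by
        gcongr
        linarith
    _ = _ := by field_simp

/-- Predictive OMD regret bound. With `φ : D → ℝ≥0` differentiable and
1-strongly convex w.r.t. a norm `N` (dual norm `Nd`) on a closed convex `D ⊆ ℝⁿ`, `η > 0`,
`z⁰ ∈ D`, `xᵗ = argmin_{x∈D} ⟨mᵗ, x⟩ + (1/η)D(x‖zᵗ⁻¹)`, and
`zᵗ = argmin_{z∈D} ⟨ℓᵗ, z⟩ + (1/η)D(z‖zᵗ⁻¹)`, where `D(·‖·)` is the Bregman divergence of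
`φ`, for all `x̂ ∈ D` and `T`:
`Σₜ₌₁ᵀ ⟨ℓᵗ, xᵗ − x̂⟩ ≤ D(x̂‖z⁰)/η + η Σₜ₌₁ᵀ ‖ℓᵗ−mᵗ‖*² − (1/(8η)) Σₜ₌₁^{T−1} ‖xᵗ⁺¹−xᵗ‖²`. -/
theorem stmt_14 {n : ℕ} (D : Set (EuclideanSpace ℝ (Fin n)))
    (hDc : IsClosed D) (hDconv : Convex ℝ D)
    (N Nd : EuclideanSpace ℝ (Fin n) → ℝ)
    (hNadd : ∀ x y, N (x + y) ≤ N x + N y)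
    (hNsmul : ∀ (c : ℝ) (x), N (c • x) = |c| * N x)
    (hNpos : ∀ x, x ≠ 0 → 0 < N x)
    (hNd : ∀ a, Nd a = sSup {r : ℝ | ∃ x, N x ≤ 1 ∧ r = ⟪a, x⟫_ℝ})
    (φ : EuclideanSpace ℝ (Fin n) → ℝ) (hφ0 : ∀ x ∈ D, 0 ≤ φ x)
    (gφ : EuclideanSpace ℝ (Fin n) → EuclideanSpace ℝ (Fin n))
    (hdiff : ∀ x ∈ D, HasGradientAt φ (gφ x) x)
    (hstrong : ∀ x ∈ D, ∀ y ∈ D, φ x + ⟪gφ x, y - x⟫_ℝ + 1 / 2 * (N (y - x)) ^ 2 ≤ φ y)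
    (Breg : EuclideanSpace ℝ (Fin n) → EuclideanSpace ℝ (Fin n) → ℝ)
    (hBreg : ∀ x c, Breg x c = φ x - φ c - ⟪gφ c, x - c⟫_ℝ)
    (η : ℝ) (hη : 0 < η)
    (ℓ m x z : ℕ → EuclideanSpace ℝ (Fin n))
    (hz0 : z 0 ∈ D)
    (hx : ∀ t : ℕ, 1 ≤ t → x t ∈ D ∧
      IsMinOn (fun y => ⟪m t, y⟫_ℝ + 1 / η * Breg y (z (t - 1))) D (x t))
    (hz : ∀ t : ℕ, 1 ≤ t → z t ∈ D ∧
      IsMinOn (fun y => ⟪ℓ t, y⟫_ℝ + 1 / η * Breg y (z (t - 1))) D (z t)) :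
    ∀ xhat ∈ D, ∀ T : ℕ,
      ∑ t ∈ Finset.Icc 1 T, ⟪ℓ t, x t - xhat⟫_ℝ ≤
        Breg xhat (z 0) / η + η * ∑ t ∈ Finset.Icc 1 T, (Nd (ℓ t - m t)) ^ 2 -
          1 / (8 * η) * ∑ t ∈ Finset.Icc 1 (T - 1), (N (x (t + 1) - x t)) ^ 2 :=
  stmt_14_general D hDconv N Nd hNadd hNsmul hNpos hNd φ gφ hdiff hstrong Breg hBreg η hη ℓ m x z
    hz0 hx hz
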